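/- arXiv:2505.01148 — 4 statements merged into one kernel-verified Lean document; each statement's English description precedes it below -/
import Mathlib

section
/- Define R_n := ∏_{k=2n+1}^{∞} cos(π·(2n)!/k!) for n ∈ ℕ. Then 0 < R_n < 1 for every n and R_n → 1 as n → ∞. -/
open Nat Filter

noncomputable def R (n : ℕ) : ℝ :=
  ∏' k : ℕ, Real.cos (Real.pi * ((2 * n)! : ℝ) / ((k + 2 * n + 1)! : ℝ))

noncomputable def Saux (n : ℕ) : ℝ :=
  ∑' k : ℕ, Real.log (Real.cos (Real.pi * ((2 * n)! : ℝ) / ((k + 2 * n + 1)! : ℝ)))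

noncomputable def qaux (n : ℕ) : ℝ := ((2 * n + 1 : ℝ)⁻¹) ^ 2

open Real in
lemma frac_bound (n k : ℕ) :
    ((2 * n)! : ℝ) / ((k + 2 * n + 1)! : ℝ) ≤ ((2 * n + 1 : ℝ)⁻¹) ^ (k + 1) := by
  have h : ((2 * n)! : ℝ) * (2 * n + 1) ^ (k + 1) ≤ ((k + 2 * n + 1)! : ℝ) := by
    have := @Nat.factorial_mul_pow_le_factorial (2 * n) (k + 1)
    have h2 : 2 * n + (k + 1) = k + 2 * n + 1 := by ring
    rw [h2] at this
    exact_mod_cast this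
  rw [inv_pow, div_le_iff₀ (by positivity), inv_mul_eq_div, le_div_iff₀ (by positivity)]
  push_cast at h ⊢
  linarith [h]

open Real in
lemma x_pos (n k : ℕ) : 0 < Real.pi * ((2 * n)! : ℝ) / ((k + 2 * n + 1)! : ℝ) := by
  have := Real.pi_pos
  positivity

open Real in
lemma x_le (n k : ℕ) :
    Real.pi * ((2 * n)! : ℝ) / ((k + 2 * n + 1)! : ℝ) ≤ Real.pi * ((2 * n + 1 : ℝ)⁻¹) ^ (k + 1) := by
  rw [mul_div_assoc]
  exact mul_le_mul_of_nonneg_left (frac_bound n k) Real.pi_pos.le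

open Real in
lemma key (n : ℕ) (hn : 0 < n) :
    R n = Real.exp (Saux n) ∧ Saux n < 0 ∧
      -(2 * Real.pi ^ 2 * qaux n * (1 - qaux n)⁻¹) ≤ Saux n := by
  set x : ℕ → ℝ := fun k => Real.pi * ((2 * n)! : ℝ) / ((k + 2 * n + 1)! : ℝ) with hx
  have h3 : (3 : ℝ) ≤ 2 * n + 1 := by
    have : (1:ℝ) ≤ n := by exact_mod_cast hn
    linarith
  have hb0 : (0:ℝ) < (2 * n + 1 : ℝ)⁻¹ := by positivity
  have hb1 : ((2 * n + 1 : ℝ))⁻¹ ≤ 1/3 := by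
    rw [inv_le_comm₀ (by linarith) (by norm_num)]; linarith
  have hxle : ∀ k, x k ≤ Real.pi / 3 := by
    intro k
    refine (x_le n k).trans ?_
    have : ((2 * n + 1 : ℝ)⁻¹) ^ (k + 1) ≤ ((2 * n + 1 : ℝ)⁻¹) ^ 1 :=
      pow_le_pow_of_le_one hb0.le (by linarith) (by omega)
    have hpi := Real.pi_pos
    rw [pow_one] at this
    calc Real.pi * ((2 * n + 1 : ℝ)⁻¹) ^ (k + 1) ≤ Real.pi * (1/3) := by nlinarith
      _ = Real.pi / 3 := by ring
  have hxpos : ∀ k, 0 < x k := fun k => x_pos n k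
  have hpi : Real.pi ≤ 3.15 := Real.pi_lt_d2.le
  have hpi0 := Real.pi_pos
  have hcos2 : ∀ k, (2/5 : ℝ) ≤ Real.cos (x k) := by
    intro k
    have h1 := Real.one_sub_sq_div_two_le_cos (x := x k)
    have h2 := hxle k
    have h3 := (hxpos k).le
    nlinarith
  have hcos1 : ∀ k, Real.cos (x k) < 1 := by
    intro k
    have := Real.cos_lt_cos_of_nonneg_of_le_pi (le_refl 0) ((hxle k).trans (by linarith)) (hxpos k)
    simpa using this
  have hlogneg : ∀ k, Real.log (Real.cos (x k)) < 0 := fun k =>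
    Real.log_neg (by linarith [hcos2 k]) (hcos1 k)
  have hlogge : ∀ k, -Real.log (Real.cos (x k)) ≤ 2 * (x k) ^ 2 := by
    intro k
    have hc : (0:ℝ) < Real.cos (x k) := by linarith [hcos2 k]
    have h1 := Real.log_le_sub_one_of_pos (inv_pos.2 hc)
    rw [Real.log_inv] at h1
    have hmul : Real.cos (x k) * (Real.cos (x k))⁻¹ = 1 := mul_inv_cancel₀ hc.ne'
    have h2 := Real.one_sub_sq_div_two_le_cos (x := x k)
    nlinarith [hcos2 k, sq_nonneg (x k)]
  -- geometric bound on x k ^ 2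
  have hq0 : (0:ℝ) ≤ qaux n := by simp only [qaux]; positivity
  have hq1 : qaux n < 1 := by
    have : ((2 * n + 1 : ℝ))⁻¹ < 1 := by linarith
    calc qaux n = ((2 * n + 1 : ℝ)⁻¹) ^ 2 := rfl
      _ < 1 := by nlinarith
  have hx2 : ∀ k, (x k) ^ 2 ≤ Real.pi ^ 2 * (qaux n) ^ (k + 1) := by
    intro k
    have h1 := x_le n k
    have h2 := (hxpos k).le
    have : (x k) ^ 2 ≤ (Real.pi * ((2 * n + 1 : ℝ)⁻¹) ^ (k + 1)) ^ 2 := by nlinarith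
    calc (x k) ^ 2 ≤ (Real.pi * ((2 * n + 1 : ℝ)⁻¹) ^ (k + 1)) ^ 2 := this
      _ = Real.pi ^ 2 * (qaux n) ^ (k + 1) := by
          simp only [qaux, mul_pow, ← pow_mul]; ring_nf
  have hg : Summable (fun k : ℕ => 2 * Real.pi ^ 2 * (qaux n) ^ (k + 1)) := by
    have := (summable_geometric_of_lt_one hq0 hq1).mul_left (2 * Real.pi ^ 2 * qaux n)
    exact this.congr fun k => by ring
  have hneg : Summable (fun k => -Real.log (Real.cos (x k))) := by
    refine Summable.of_nonneg_of_le (fun k => by linarith [hlogneg k]) (fun k => ?_) hg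
    calc -Real.log (Real.cos (x k)) ≤ 2 * (x k) ^ 2 := hlogge k
      _ ≤ 2 * (Real.pi ^ 2 * (qaux n) ^ (k + 1)) := by nlinarith [hx2 k]
      _ = 2 * Real.pi ^ 2 * (qaux n) ^ (k + 1) := by ring
  have hsum : Summable (fun k => Real.log (Real.cos (x k))) := by
    have := hneg.neg
    simpa using this
  constructor
  · -- R n = exp (Saux n)
    have hp : HasProd (fun k => Real.exp (Real.log (Real.cos (x k)))) (Real.exp (Saux n)) :=
      hsum.hasSum.rexp
    have heq : (fun k => Real.exp (Real.log (Real.cos (x k)))) = fun k => Real.cos (x k) := by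
      funext k
      exact Real.exp_log (by linarith [hcos2 k])
    rw [heq] at hp
    exact hp.tprod_eq
  constructor
  · -- Saux n < 0
    have h0 : Summable (fun _ : ℕ => (0:ℝ)) := summable_zero
    have := Summable.tsum_lt_tsum (f := fun k => Real.log (Real.cos (x k))) (g := fun _ => (0:ℝ))
      (i := 0) (fun k => (hlogneg k).le) (hlogneg 0) hsum h0
    simpa [Saux] using this
  · -- lower bound
    have hts : ∑' k : ℕ, 2 * Real.pi ^ 2 * (qaux n) ^ (k + 1)
        = 2 * Real.pi ^ 2 * qaux n * (1 - qaux n)⁻¹ := by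
      have : (fun k : ℕ => 2 * Real.pi ^ 2 * (qaux n) ^ (k + 1))
          = fun k : ℕ => 2 * Real.pi ^ 2 * qaux n * (qaux n) ^ k := by
        funext k; ring
      rw [this, tsum_mul_left, tsum_geometric_of_lt_one hq0 hq1]
    have hle : ∑' k, -Real.log (Real.cos (x k)) ≤ 2 * Real.pi ^ 2 * qaux n * (1 - qaux n)⁻¹ := by
      rw [← hts]
      refine Summable.tsum_le_tsum (fun k => ?_) hneg hg
      calc -Real.log (Real.cos (x k)) ≤ 2 * (x k) ^ 2 := hlogge k
        _ ≤ 2 * Real.pi ^ 2 * (qaux n) ^ (k + 1) := by nlinarith [hx2 k]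
    have heq : ∑' k, -Real.log (Real.cos (x k)) = -Saux n := by
      rw [tsum_neg]; rfl
    rw [heq] at hle
    linarith

theorem stmt5 :
    (∀ n : ℕ, 0 < n → 0 < R n ∧ R n < 1) ∧
      Tendsto R atTop (nhds 1) := by
  constructor
  · intro n hn
    obtain ⟨hR, hS, _⟩ := key n hn
    rw [hR]
    exact ⟨Real.exp_pos _, by simpa using Real.exp_lt_exp.2 hS⟩
  · -- Tendsto
    have hq : Tendsto qaux atTop (nhds 0) := by
      have h1 : Tendsto (fun n : ℕ => (2 * n + 1 : ℝ)) atTop atTop := by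
        apply tendsto_atTop_mono (fun n => ?_) tendsto_natCast_atTop_atTop
        have : (0:ℝ) ≤ n := Nat.cast_nonneg n
        linarith
      have h2 : Tendsto (fun n : ℕ => (2 * n + 1 : ℝ)⁻¹) atTop (nhds 0) :=
        h1.inv_tendsto_atTop
      show Tendsto (fun n : ℕ => ((2 * n + 1 : ℝ)⁻¹) ^ 2) atTop (nhds 0)
      simpa using h2.pow 2
    have hB : Tendsto (fun n => 2 * Real.pi ^ 2 * qaux n * (1 - qaux n)⁻¹) atTop (nhds 0) := by
      have h1 : Tendsto (fun n => 2 * Real.pi ^ 2 * qaux n) atTop (nhds 0) := by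
        have := hq.const_mul (2 * Real.pi ^ 2)
        simpa using this
      have h2 : Tendsto (fun n => (1 - qaux n)⁻¹) atTop (nhds 1) := by
        have := (tendsto_const_nhds (x := (1:ℝ)).sub hq).inv₀ (by norm_num)
        simpa using this
      have := h1.mul h2
      simpa using this
    have hS : Tendsto Saux atTop (nhds 0) := by
      refine tendsto_of_tendsto_of_tendsto_of_le_of_le' (by simpa using hB.neg) tendsto_const_nhds ?_ ?_
      · filter_upwards [eventually_gt_atTop 0] with n hn
        simpa using (key n hn).2.2
      · filter_upwards [eventually_gt_atTop 0] with n hn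
        exact (key n hn).2.1.le
    have := (Real.continuous_exp.continuousAt (x := 0)).tendsto.comp hS
    rw [Real.exp_zero] at this
    refine this.congr' ?_
    filter_upwards [eventually_gt_atTop 0] with n hn
    exact ((key n hn).1).symm
end

section
/- Let f_s(t) = ∏_{k=1}^{∞} cos(t/k!) for t ∈ ℝ, and set t_n = π·(2n)!. Then f_s(t_n) > -1 for every n ∈ ℕ and f_s(t_n) → -1 as n → ∞. -/
/-!
Write `t_n = π (2n)!`. For `k ≤ 2n` the angle `t_n / k!` is the integer `(2n)!/k!` times `π`,
and these integers add up to an odd number: all of them are multiples of `2n` except the last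
one, which is `1`. So the first `2n` factors of `f_s(t_n)` multiply to `-1`. The remaining
factors have angles `t_n / (2n+1+j)! ≤ π / (2n+1)^(j+1)`, so the logarithm of their product is a
negative series dominated, uniformly in `n ≥ 1`, by a geometric series, with every term tending
to `0` as `n → ∞`. Hence that product lies in `(0, 1)` and tends to `1` by dominated
convergence.
-/

open Nat Filter

noncomputable def fs (t : ℝ) : ℝ := ∏' k : ℕ, Real.cos (t / ((k + 1)! : ℝ))

noncomputable def tn (n : ℕ) : ℝ := Real.pi * ((2 * n)! : ℝ)

open Real Finset Topology

lemma abs_log_cos_le_two_mul_sq {x : ℝ} (hx : |x| ≤ π / 3) : |log (cos x)| ≤ 2 * x ^ 2 := by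
  obtain ⟨hx₁, hx₂⟩ := abs_le.1 hx
  have hsq : x ^ 2 ≤ 10 / 9 := by nlinarith [pi_lt_d2]
  have hcos : 0 < cos x := cos_pos_of_mem_Ioo ⟨by linarith [pi_pos], by linarith [pi_pos]⟩
  have hcos_ge : 1 - x ^ 2 / 2 ≤ cos x := one_sub_sq_div_two_le_cos
  rw [abs_of_nonpos (log_nonpos hcos.le (cos_le_one x)), neg_le]
  calc -(2 * x ^ 2) ≤ 1 - (cos x)⁻¹ := by
        -- `(1 + 2x²)(1 - x²/2) = 1 + x²(3/2 - x²) ≥ 1`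
        rw [neg_le_sub_iff_le_add, inv_le_iff_one_le_mul₀ hcos]
        nlinarith [mul_le_mul_of_nonneg_left hcos_ge (by positivity : 0 ≤ 2 * x ^ 2 + 1)]
    _ ≤ log (cos x) := one_sub_inv_le_log_of_pos hcos

lemma log_cos_neg {x : ℝ} (h₀ : 0 < x) (h : x < π / 2) : log (cos x) < 0 := by
  refine log_neg (cos_pos_of_mem_Ioo ⟨by linarith, h⟩) ?_
  simpa using cos_lt_cos_of_nonneg_of_le_pi le_rfl (by linarith [pi_pos]) h₀

lemma cos_pi_mul_factorial_div_factorial {k N : ℕ} (h : k ≤ N) :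
    cos (π * N ! / k !) = (-1) ^ (N ! / k !) := by
  rw [← cos_nat_mul_pi, Nat.cast_div (factorial_dvd_factorial h) (by positivity), mul_div_assoc,
    mul_comm]

lemma odd_sum_factorial_div_factorial {N : ℕ} (hN : Even N) (h₀ : N ≠ 0) :
    Odd (∑ i ∈ range N, N ! / (i + 1)!) := by
  obtain ⟨M, rfl⟩ := exists_eq_succ_of_ne_zero h₀
  rw [sum_range_succ, Nat.div_self (factorial_pos _)]
  refine Even.add_one (Finset.even_sum _ fun i hi => ?_)
  have hdvd : (i + 1)! ∣ M ! := factorial_dvd_factorial (mem_range.1 hi)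
  rw [factorial_succ, Nat.mul_div_assoc _ hdvd]
  exact hN.mul_right _

lemma prod_cos_pi_mul_factorial_div_factorial {N : ℕ} (hN : Even N) (h₀ : N ≠ 0) :
    ∏ i ∈ range N, cos (π * N ! / (i + 1)!) = -1 := by
  rw [prod_congr rfl fun i hi => cos_pi_mul_factorial_div_factorial (mem_range.1 hi),
    prod_pow_eq_pow_sum, (odd_sum_factorial_div_factorial hN h₀).neg_one_pow]

/-- The angle `t_n / k!` of the factor of `R_n` with index `k = j + 2n + 1`. -/
noncomputable def tailAngle (n j : ℕ) : ℝ := tn n / ((j + 2 * n + 1)! : ℝ)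

lemma tailAngle_pos (n j : ℕ) : 0 < tailAngle n j := by
  unfold tailAngle tn
  positivity

lemma tailAngle_le (n j : ℕ) : tailAngle n j ≤ π / (2 * n + 1) ^ (j + 1) := by
  have h : (2 * n)! * (2 * n + 1) ^ (j + 1) ≤ (j + 2 * n + 1)! := by
    rw [show j + 2 * n + 1 = 2 * n + (j + 1) by ring]
    exact factorial_mul_pow_le_factorial
  rw [tailAngle, tn, div_le_div_iff₀ (by positivity) (by positivity), mul_assoc]
  gcongr
  exact_mod_cast h

lemma tailAngle_le_pi_mul_one_third_pow {n : ℕ} (hn : 0 < n) (j : ℕ) :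
    tailAngle n j ≤ π * (1 / 3) ^ (j + 1) := by
  refine (tailAngle_le n j).trans ?_
  rw [one_div_pow, ← div_eq_mul_one_div]
  gcongr
  have : (1 : ℝ) ≤ n := by exact_mod_cast hn
  linarith

lemma tailAngle_le_pi_div_three {n : ℕ} (hn : 0 < n) (j : ℕ) : tailAngle n j ≤ π / 3 := by
  refine (tailAngle_le_pi_mul_one_third_pow hn j).trans ?_
  rw [div_eq_mul_one_div π 3]
  gcongr
  exact pow_le_of_le_one (by norm_num) (by norm_num) (succ_ne_zero j)

lemma summable_two_mul_pi_sq_mul_geometric :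
    Summable fun j : ℕ => 2 * π ^ 2 * (1 / 9 : ℝ) ^ (j + 1) :=
  ((summable_nat_add_iff 1).2 (summable_geometric_of_lt_one (by norm_num) (by norm_num))).mul_left _

lemma abs_log_cos_tailAngle_le {n : ℕ} (hn : 0 < n) (j : ℕ) :
    |log (cos (tailAngle n j))| ≤ 2 * π ^ 2 * (1 / 9 : ℝ) ^ (j + 1) := by
  have h₀ := tailAngle_pos n j
  have h₁ := tailAngle_le_pi_mul_one_third_pow hn j
  have hpow : ((1 / 3 : ℝ) ^ (j + 1)) ^ 2 = (1 / 9) ^ (j + 1) := by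
    rw [← pow_mul, mul_comm, pow_mul]
    norm_num
  calc |log (cos (tailAngle n j))| ≤ 2 * tailAngle n j ^ 2 :=
        abs_log_cos_le_two_mul_sq (by rw [abs_of_pos h₀]; exact tailAngle_le_pi_div_three hn j)
    _ ≤ 2 * (π * (1 / 3) ^ (j + 1)) ^ 2 := by gcongr
    _ = 2 * π ^ 2 * (1 / 9 : ℝ) ^ (j + 1) := by rw [mul_pow, hpow, mul_assoc]

lemma summable_log_cos_tailAngle {n : ℕ} (hn : 0 < n) :
    Summable fun j => log (cos (tailAngle n j)) :=
  summable_two_mul_pi_sq_mul_geometric.of_norm_bounded (abs_log_cos_tailAngle_le hn)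

lemma fs_tn_eq {n : ℕ} (hn : 0 < n) : fs (tn n) = -exp (∑' j, log (cos (tailAngle n j))) := by
  have hcos (j : ℕ) : exp (log (cos (tailAngle n j))) = cos (tailAngle n j) :=
    exp_log (cos_pos_of_mem_Ioo ⟨by linarith [pi_pos, tailAngle_pos n j],
      by linarith [pi_pos, tailAngle_le_pi_div_three hn j]⟩)
  have htail :
      HasProd (fun j => cos (tailAngle n j)) (exp (∑' j, log (cos (tailAngle n j)))) := by
    simpa only [Function.comp_def, hcos] using (summable_log_cos_tailAngle hn).hasSum.rexp
  rw [fs, ← Multipliable.prod_mul_tprod_nat_mul' (f := fun k => cos (tn n / ((k + 1)! : ℝ)))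
    (k := 2 * n) htail.multipliable]
  have hhead : ∏ i ∈ range (2 * n), cos (tn n / ((i + 1)! : ℝ)) = -1 :=
    prod_cos_pi_mul_factorial_div_factorial (even_two_mul n) (by omega)
  rw [hhead, neg_one_mul]
  exact congrArg Neg.neg htail.tprod_eq

lemma tsum_log_cos_tailAngle_neg {n : ℕ} (hn : 0 < n) :
    ∑' j, log (cos (tailAngle n j)) < 0 := by
  have hneg (j : ℕ) : log (cos (tailAngle n j)) < 0 :=
    log_cos_neg (tailAngle_pos n j) (by linarith [pi_pos, tailAngle_le_pi_div_three hn j])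
  simpa using (summable_log_cos_tailAngle hn).tsum_lt_tsum (fun j => (hneg j).le) (hneg 0)
    summable_zero

lemma tendsto_tailAngle (j : ℕ) : Tendsto (fun n => tailAngle n j) atTop (𝓝 0) := by
  have h2n : Tendsto (fun n : ℕ => 2 * (n : ℝ) + 1) atTop atTop :=
    tendsto_atTop_add_const_right _ 1 (tendsto_natCast_atTop_atTop.const_mul_atTop two_pos)
  exact squeeze_zero (fun n => (tailAngle_pos n j).le) (fun n => tailAngle_le n j)
    (tendsto_const_nhds.div_atTop ((tendsto_pow_atTop (succ_ne_zero j)).comp h2n))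

lemma tendsto_tsum_log_cos_tailAngle :
    Tendsto (fun n => ∑' j, log (cos (tailAngle n j))) atTop (𝓝 0) := by
  have hterm (j : ℕ) : Tendsto (fun n => log (cos (tailAngle n j))) atTop (𝓝 0) := by
    simpa using (((continuous_cos.tendsto 0).comp (tendsto_tailAngle j)).log (by simp))
  simpa using tendsto_tsum_of_dominated_convergence summable_two_mul_pi_sq_mul_geometric hterm
    ((eventually_gt_atTop 0).mono fun n hn => abs_log_cos_tailAngle_le hn)

theorem stmt6 :
    (∀ n : ℕ, 0 < n → -1 < fs (tn n)) ∧
      Tendsto (fun n => fs (tn n)) atTop (nhds (-1)) := by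
  refine ⟨fun n hn => ?_, ?_⟩
  · rw [fs_tn_eq hn, neg_lt_neg_iff]
    exact exp_lt_one_iff.2 (tsum_log_cos_tailAngle_neg hn)
  · have hlim := ((continuous_exp.tendsto 0).comp tendsto_tsum_log_cos_tailAngle).neg
    rw [exp_zero] at hlim
    exact hlim.congr' ((eventually_gt_atTop 0).mono fun n hn => (fs_tn_eq hn).symm)
end

section
/- Let f(t) = c_d + c_a·(e^{it}-1)/(it) + c_s·e^{it/2}·∏_{k=1}^{∞} cos(t/3^k), where c_d > c_s > 0, c_a ≥ 0, and c_d + c_a + c_s = 1. Then f(t) ≠ 0 for every t ∈ ℝ. -/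
/-!
Multiplying by `e^{-it/2}` turns the uniform part into the real number `2 sin(t/2) / t` and the
Cantor part into the real number `∏ cos(t/3^k)`, so the only non-real term left is
`c_d e^{-it/2}`. A zero therefore forces `sin(t/2) = 0`, which kills the uniform part, and then
`c_d = |c_s ∏ cos(t/3^k)| ≤ c_s`, contradicting `c_s < c_d`.
-/

open Complex

theorem norm_tprod_le_one {ι E : Type*} [NormedCommRing E] [NormOneClass E] {f : ι → E}
    (hf : ∀ i, ‖f i‖ ≤ 1) : ‖∏' i, f i‖ ≤ 1 := by
  by_cases hm : Multipliable f
  · refine le_of_tendsto' ((continuous_norm.tendsto _).comp hm.hasProd) fun s => ?_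
    exact (Finset.norm_prod_le s f).trans
      (Finset.prod_le_one (fun _ _ => norm_nonneg _) fun i _ => hf i)
  · simp [tprod_eq_one_of_not_multipliable hm]

-- Also true at `t = 0`: both sides are `0` since `x / 0 = 0`.
theorem exp_mul_I_sub_one_div (t : ℝ) :
    (exp (t * I) - 1) / (t * I) = exp (t * I / 2) * ((2 * Real.sin (t / 2) / t : ℝ) : ℂ) := by
  have hsin : exp (t * I) - 1 = exp (t * I / 2) * (2 * Real.sin (t / 2) * I) := by
    have hsq : exp (t * I / 2) * exp (t * I / 2) = exp (t * I) := by rw [← exp_add]; ring_nf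
    have hinv : exp (t * I / 2) * exp (-(t / 2) * I) = 1 := by rw [← exp_add]; ring_nf; simp
    rw [ofReal_sin, sin, show ((t / 2 : ℝ) : ℂ) * I = t * I / 2 by push_cast; ring]
    push_cast
    linear_combination (-1 : ℂ) * hsq - I ^ 2 * hinv + (exp (t * I / 2) ^ 2 - 1) * I_sq
  rw [hsin]
  rcases eq_or_ne t 0 with rfl | ht
  · simp
  · push_cast
    field_simp

theorem sin_eq_zero_of_mul_exp_add_ofReal_eq_zero {a x θ : ℝ} (ha : a ≠ 0)
    (h : (a : ℂ) * exp (θ * I) + x = 0) : Real.sin θ = 0 := by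
  simpa [exp_im, ha] using congrArg im h

theorem abs_eq_abs_of_mul_exp_add_ofReal_eq_zero {a x θ : ℝ}
    (h : (a : ℂ) * exp (θ * I) + x = 0) : |a| = |x| := by
  simpa [norm_exp_ofReal_mul_I] using congrArg norm (eq_neg_of_add_eq_zero_left h)

theorem stmt10_general (cd ca cs : ℝ) (hcs : 0 < cs) (hdom : cs < cd) :
    ∀ t : ℝ,
      (cd : ℂ) + ca * ((Complex.exp ((t : ℂ) * Complex.I) - 1) / ((t : ℂ) * Complex.I))
        + cs * Complex.exp ((t : ℂ) * Complex.I / 2) *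
            ((∏' k : ℕ, Real.cos (t / 3 ^ (k + 1)) : ℝ) : ℂ) ≠ 0 := by
  intro t hzero
  have hcd_pos : 0 < cd := hcs.trans hdom
  set P := ∏' k : ℕ, Real.cos (t / 3 ^ (k + 1))
  have hP : |P| ≤ 1 :=
    norm_tprod_le_one (f := fun k : ℕ => Real.cos (t / 3 ^ (k + 1))) fun _ => Real.abs_cos_le_one _
  rw [exp_mul_I_sub_one_div] at hzero
  set r := 2 * Real.sin (t / 2) / t
  have hrot : (cd : ℂ) * exp ((-(t / 2) : ℝ) * I) + ((ca * r + cs * P : ℝ) : ℂ) = 0 := by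
    have hinv : exp (t * I / 2) * exp ((-(t / 2) : ℝ) * I) = 1 := by
      rw [← exp_add]; push_cast; ring_nf; exact exp_zero
    refine (mul_eq_zero_iff_left (exp_ne_zero (t * I / 2))).mp ?_
    push_cast at hinv ⊢
    linear_combination hzero + (cd : ℂ) * hinv
  have hsin : Real.sin (t / 2) = 0 := by
    simpa using sin_eq_zero_of_mul_exp_add_ofReal_eq_zero hcd_pos.ne' hrot
  have hcd : cd = cs * |P| := by
    have := abs_eq_abs_of_mul_exp_add_ofReal_eq_zero hrot
    simpa only [r, hsin, mul_zero, zero_div, zero_add, abs_mul, abs_of_pos hcs,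
      abs_of_pos hcd_pos] using this
  have : cd ≤ cs := hcd ▸ mul_le_of_le_one_right hcs.le hP
  linarith

theorem stmt10 (cd ca cs : ℝ) (hcs : 0 < cs) (hdom : cs < cd) (hca : 0 ≤ ca)
    (hsum : cd + ca + cs = 1) :
    ∀ t : ℝ,
      (cd : ℂ) + ca * ((Complex.exp ((t : ℂ) * Complex.I) - 1) / ((t : ℂ) * Complex.I))
        + cs * Complex.exp ((t : ℂ) * Complex.I / 2) *
            ((∏' k : ℕ, Real.cos (t / 3 ^ (k + 1)) : ℝ) : ℂ) ≠ 0 :=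
  stmt10_general cd ca cs hcs hdom
end

section
/- Let μ be a probability measure on ℝ with Lebesgue decomposition μ = c_d μ_d + c_a μ_a + c_s μ_s (discrete, absolutely continuous, continuous singular parts) where c_d > 0, and let f, f_d, f_a, f_s be the corresponding characteristic functions. If μ_d := inf_{t∈ℝ}|f_d(t)| > 0, c_s < c_d·μ_d, and f(t) ≠ 0 for all t ∈ ℝ, then inf_{t∈ℝ}|f(t)| > 0. -/
/-! Outside a compact set the discrete part dominates: `|f| ≥ c_d μ_d - c_s - |c_a f_a|`, and
`f_a → 0` at infinity by the Riemann–Lebesgue lemma, so `|f| ≥ (c_d μ_d - c_s) / 2` there.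
On the compact set, the continuous nonvanishing `|f|` has a positive minimum. -/

open MeasureTheory

noncomputable def charFun' (μ : Measure ℝ) (t : ℝ) : ℂ :=
  ∫ x, Complex.exp ((t : ℂ) * (x : ℂ) * Complex.I) ∂μ

open Filter Topology Real FourierTransform

lemma charFun'_eq_charFun : charFun' = charFun := by
  ext μ t
  rw [charFun', charFun_apply_real]

theorem charFun_eq_fourier_rnDeriv {μ : Measure ℝ} [SigmaFinite μ] (hac : μ ≪ volume) (t : ℝ) :
    charFun μ t = 𝓕 (fun v ↦ ((μ.rnDeriv volume v).toReal : ℂ)) (-(2 * π)⁻¹ * t) := by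
  rw [charFun_apply_real, fourier_real_eq_integral_exp_smul, ← integral_rnDeriv_smul hac]
  congr 1 with v
  have : -2 * π * v * (-(2 * π)⁻¹ * t) = t * v := by field_simp
  rw [this, Complex.real_smul, smul_eq_mul, Complex.ofReal_mul, mul_comm]

theorem tendsto_charFun_cocompact_of_absolutelyContinuous {μ : Measure ℝ} [SigmaFinite μ]
    (hac : μ ≪ volume) :
    Tendsto (charFun μ) (cocompact ℝ) (𝓝 0) := by
  have hscale : Tendsto (fun t : ℝ ↦ -(2 * π)⁻¹ * t) (cocompact ℝ) (cocompact ℝ) :=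
    (Homeomorph.mulLeft₀ _ (by simp [pi_ne_zero] : -(2 * π)⁻¹ ≠ 0)).map_cocompact.le
  exact ((Real.zero_at_infty_fourier _).comp hscale).congr fun t ↦
    (charFun_eq_fourier_rnDeriv hac t).symm

lemma exists_pos_forall_le_norm {X E : Type*} [TopologicalSpace X] [Nonempty X]
    [NormedAddCommGroup E] {g : X → E} (hg : Continuous g) (hne : ∀ x, g x ≠ 0) {ε : ℝ}
    (hε : 0 < ε) (hfar : ∀ᶠ x in cocompact X, ε ≤ ‖g x‖) :
    ∃ δ, 0 < δ ∧ ∀ x, δ ≤ ‖g x‖ := by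
  -- the truncation `min ε ‖g‖` is eventually constant, hence attains its infimum
  have hmin : ∀ᶠ x in cocompact X, min ε ‖g (Classical.arbitrary X)‖ ≤ min ε ‖g x‖ :=
    hfar.mono fun x hx ↦ (min_le_left _ _).trans (le_min le_rfl hx)
  obtain ⟨x₀, hx₀⟩ := (continuous_const.min hg.norm).exists_forall_le' _ hmin
  exact ⟨min ε ‖g x₀‖, lt_min hε (norm_pos_iff.2 (hne x₀)),
    fun x ↦ (hx₀ x).trans (min_le_right _ _)⟩

lemma sub_sub_le_norm_add_add {cd cs : ℝ} (hcd : 0 ≤ cd) (hcs : 0 ≤ cs) {zd za zs : ℂ}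
    (hzs : ‖zs‖ ≤ 1) : cd * ‖zd‖ - ‖za‖ - cs ≤ ‖cd * zd + za + cs * zs‖ := by
  have hd : ‖(cd : ℂ) * zd‖ = cd * ‖zd‖ := by
    rw [norm_mul, Complex.norm_of_nonneg hcd]
  have hs : ‖(cs : ℂ) * zs‖ ≤ cs := by
    rw [norm_mul, Complex.norm_of_nonneg hcs]
    exact mul_le_of_le_one_right hcs hzs
  have htri := norm_le_add_norm_add ((cd : ℂ) * zd) (za + cs * zs)
  rw [← add_assoc] at htri
  linarith [norm_add_le za (cs * zs)]

theorem stmt11_general (μd μa μs : Measure ℝ)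
    [IsProbabilityMeasure μd] [IsProbabilityMeasure μa] [IsProbabilityMeasure μs]
    (cd ca cs : ℝ) (hcd : 0 < cd) (hcs : 0 ≤ cs)
    -- μa is absolutely continuous
    (hac : μa ≪ volume)
    (f : ℝ → ℂ)
    (hf : ∀ t : ℝ, f t = cd * charFun' μd t + ca * charFun' μa t + cs * charFun' μs t)
    (m : ℝ) (hmd : ∀ t : ℝ, m ≤ ‖charFun' μd t‖)
    (hdom : cs < cd * m)
    (hnz : ∀ t : ℝ, f t ≠ 0) :
    ∃ δ : ℝ, 0 < δ ∧ ∀ t : ℝ, δ ≤ ‖f t‖ := by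
  rw [charFun'_eq_charFun] at hf hmd
  have hfc : Continuous f := by
    rw [funext hf]
    fun_prop
  have hlow : ∀ t, cd * m - ‖ca * charFun μa t‖ - cs ≤ ‖f t‖ := fun t ↦ by
    rw [hf]
    refine le_trans ?_ (sub_sub_le_norm_add_add hcd.le hcs (norm_charFun_le_one t))
    gcongr
    exact hmd t
  have hsmall : ∀ᶠ t in cocompact ℝ, ‖ca * charFun μa t‖ < (cd * m - cs) / 2 := by
    refine ((tendsto_charFun_cocompact_of_absolutelyContinuous hac).const_mul _).norm
      |>.eventually_lt_const ?_
    simpa using hdom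
  refine exists_pos_forall_le_norm hfc hnz (ε := (cd * m - cs) / 2) (by linarith) ?_
  exact hsmall.mono fun t ht ↦ by linarith [hlow t]

theorem stmt11 (μd μa μs : Measure ℝ)
    [IsProbabilityMeasure μd] [IsProbabilityMeasure μa] [IsProbabilityMeasure μs]
    (cd ca cs : ℝ) (hcd : 0 < cd) (hca : 0 ≤ ca) (hcs : 0 ≤ cs)
    (hsum : cd + ca + cs = 1)
    -- μd is discrete
    (hdisc : ∃ s : Set ℝ, s.Countable ∧ μd sᶜ = 0)
    -- μa is absolutely continuous
    (hac : μa ≪ volume)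
    -- μs is continuous singular
    (hsing : μs.MutuallySingular volume) (hcont : ∀ x : ℝ, μs {x} = 0)
    (f : ℝ → ℂ)
    (hf : ∀ t : ℝ, f t = cd * charFun' μd t + ca * charFun' μa t + cs * charFun' μs t)
    (m : ℝ) (hm : 0 < m) (hmd : ∀ t : ℝ, m ≤ ‖charFun' μd t‖)
    (hdom : cs < cd * m)
    (hnz : ∀ t : ℝ, f t ≠ 0) :
    ∃ δ : ℝ, 0 < δ ∧ ∀ t : ℝ, δ ≤ ‖f t‖ :=
  stmt11_general μd μa μs cd ca cs hcd hcs hac f hf m hmd hdom hnz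
end
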